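/- arXiv:2604.18869 — 4 statements merged into one kernel-verified Lean document; each statement's English description precedes it below -/
import Mathlib

section
/- Fix an integer n ≥ 2. Let W_{<n} denote the set of non-empty words over the alphabet ℕ of length < n, and let α, β be two distinct symbols not in W_{<n}. Define a multiplication on S_n := W_{<n} ∪ {α, β} by: α·x = x·α = α and β·x = x·β = α for all x ∈ S_n, and for words u, v ∈ W_{<n}, u·v equals the concatenation uv if |u|+|v| < n, equals β if |u|+|v| = n, and equals α if |u|+|v| > n. Then this multiplication is associative, so S_n is a semigroup. -/
open Pointwise

/-- The carrier `S_n = W_{<n} ∪ {α, β}`: non-empty words over the alphabet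
`ℕ = {1, 2, 3, …}` (encoded as `ℕ+`) of length `< n`, together with two extra
symbols `α` and `β`. -/
inductive Sn (n : ℕ) : Type where
  | word : (l : List ℕ+) → l ≠ [] → l.length < n → Sn n
  | alpha : Sn n
  | beta : Sn n

/-- Multiplication on `S_n`: any product with a factor `α` or `β` equals `α`; two words
multiply by concatenation if the total length is `< n`, give `β` if the total length is
exactly `n`, and give `α` if the total length exceeds `n`. -/
def Sn.mul {n : ℕ} : Sn n → Sn n → Sn n
  | .word u hu _, .word v hv _ =>
      if h : u.length + v.length < n then
        .word (u ++ v) (by simp [hu, hv]) (by simpa using h)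
      else if u.length + v.length = n then .beta else .alpha
  | _, _ => .alpha


/-- For `n ≥ 2`, the multiplication on `S_n = W_{<n} ∪ {α, β}` is associative,
so `S_n` is a semigroup. -/
theorem stmt_4 (n : ℕ) (hn : 2 ≤ n) (x y z : Sn n) :
    (x.mul y).mul z = x.mul (y.mul z) := by
  cases x with
  | word u hu hun =>
    cases y with
    | word v hv hvn =>
      cases z with
      | word w hw hwn =>
        have hu1 : 1 ≤ u.length := List.length_pos_iff.mpr hu
        have hv1 : 1 ≤ v.length := List.length_pos_iff.mpr hv
        have hw1 : 1 ≤ w.length := List.length_pos_iff.mpr hw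
        simp only [Sn.mul]
        split_ifs <;> simp only [Sn.mul] <;> split_ifs <;>
          first
            | rfl
            | omega
            | (simp_all [List.append_assoc] <;> omega)
      | alpha => simp only [Sn.mul]; split_ifs <;> rfl
      | beta => simp only [Sn.mul]; split_ifs <;> rfl
    | alpha => cases z <;> simp [Sn.mul]
    | beta => cases z <;> simp [Sn.mul]
  | alpha => cases y <;> cases z <;> simp [Sn.mul]
  | beta => cases y <;> cases z <;> simp [Sn.mul]
end

section
/- Fix an integer n ≥ 2 and let S_n = W_{<n} ∪ {α, β} be the semigroup of non-empty words over ℕ of length < n together with symbols α, β (multiplication: any product with a factor α or β equals α; two words multiply by concatenation if the total length is < n, give β if the total length is exactly n, and give α if the total length exceeds n). For q ≥ 1 let A_{n,q} := {α} ∪ {[m] : m ≥ q}. Then for every q ≥ 1, the n-fold product set satisfies A_{n,q}^n = {α, β}, and for every h > n the h-fold product set satisfies A_{n,q}^h = {α}. -/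
/-!
The symbol `α` is absorbing, so `{α} ∪ X` times `{α} ∪ Y` is `{α} ∪ XY`. Hence for `k < n`
the power `A^k` is `{α}` together with the words of length `k` whose letters are `≥ q`
(split such a word anywhere to factor it). Multiplying words of length `n - 1` by letters
only yields `β`, so `A^n = {α, β}`; since `β` times anything is `α`, all higher powers are `{α}`.
-/

open Pointwise

instance (n : ℕ) : Mul (Sn n) := ⟨Sn.mul⟩

/-- The `h`-fold product set `B^h = {b₁ ⋯ b_h : b₁, …, b_h ∈ B}` for `h ≥ 1`
(the value at `h = 0` is junk). -/
def prodSet {S : Type*} [Mul S] (B : Set S) : ℕ → Set S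
  | 0 => ∅
  | 1 => B
  | n + 2 => prodSet B (n + 1) * B

/-- The subset `A_{n,q} = {α} ∪ {[m] : m ≥ q}` of `S_n`, where `[m]` is the one-letter
word whose only letter is `m`. -/
def Aset (n : ℕ) (q : ℕ+) : Set (Sn n) :=
  {x | x = Sn.alpha ∨
    ∃ (m : ℕ+) (hn : 1 < n), q ≤ m ∧ x = Sn.word [m] (List.cons_ne_nil m []) (by simpa using hn)}

lemma insert_mul_insert_of_absorbing {S : Type*} [Mul S] {z : S}
    (hl : ∀ y, z * y = z) (hr : ∀ x, x * z = z) (s t : Set S) :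
    insert z s * insert z t = insert z (s * t) := by
  ext x
  simp only [Set.mem_mul, Set.mem_insert_iff]
  constructor
  · rintro ⟨a, ha | ha, b, hb | hb, rfl⟩
    · exact .inl (ha ▸ hl b)
    · exact .inl (ha ▸ hl b)
    · exact .inl (hb ▸ hr a)
    · exact .inr ⟨a, ha, b, hb, rfl⟩
  · rintro (hx | ⟨a, ha, b, hb, rfl⟩)
    · exact ⟨z, .inl rfl, z, .inl rfl, hx ▸ hl z⟩
    · exact ⟨a, .inr ha, b, .inr hb, rfl⟩

lemma prodSet_succ {S : Type*} [Mul S] (B : Set S) {k : ℕ} (hk : 0 < k) :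
    prodSet B (k + 1) = prodSet B k * B := by
  obtain ⟨j, rfl⟩ := Nat.exists_eq_add_of_lt hk
  rfl

namespace Sn

variable {n : ℕ}

lemma alpha_mul (y : Sn n) : alpha * y = alpha := by
  cases y <;> rfl

lemma mul_alpha (x : Sn n) : x * alpha = alpha := by
  cases x <;> rfl

lemma beta_mul (y : Sn n) : beta * y = alpha := by
  cases y <;> rfl

lemma word_mul_word_of_lt {u v : List ℕ+} {hu hv hu' hv'} (h : u.length + v.length < n) :
    (word u hu hu' : Sn n) * word v hv hv' = word (u ++ v) (by simp [hu]) (by simpa using h) :=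
  dif_pos h

lemma word_mul_word_of_eq {u v : List ℕ+} {hu hv hu' hv'} (h : u.length + v.length = n) :
    (word u hu hu' : Sn n) * word v hv hv' = beta := by
  show Sn.mul _ _ = _
  simp [Sn.mul, h]

def words (n : ℕ) (q : ℕ+) (k : ℕ) : Set (Sn n) :=
  {x | ∃ (l : List ℕ+) (hl : l ≠ []) (hln : l.length < n),
    l.length = k ∧ (∀ m ∈ l, q ≤ m) ∧ x = word l hl hln}

variable {q : ℕ+} {j k : ℕ}

lemma words_nonempty (hk : 0 < k) (hkn : k < n) : (words n q k).Nonempty :=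
  ⟨_, List.replicate k q, by simp [hk.ne'], by simpa using hkn, by simp,
    fun m hm => (List.eq_of_mem_replicate hm).ge, rfl⟩

lemma words_mul_words (hk : 0 < k) (hj : 0 < j) (hkj : k + j < n) :
    words n q k * words n q j = words n q (k + j) := by
  ext x
  constructor
  · rintro ⟨_, ⟨u, hu, -, rfl, huq, rfl⟩, _, ⟨v, hv, -, rfl, hvq, rfl⟩, rfl⟩
    refine ⟨u ++ v, by simp [hu], by simpa using hkj, by simp, ?_, word_mul_word_of_lt hkj⟩
    simpa [or_imp, forall_and] using And.intro huq hvq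
  · rintro ⟨l, hl, hln, hlen, hlq, rfl⟩
    have htake : (l.take k).length = k := by simp; omega
    have hdrop : (l.drop k).length = j := by simp; omega
    refine ⟨_, ⟨l.take k, ?_, by omega, htake, fun m hm => hlq m (List.mem_of_mem_take hm), rfl⟩,
      _, ⟨l.drop k, ?_, by omega, hdrop, fun m hm => hlq m (List.mem_of_mem_drop hm), rfl⟩, ?_⟩
    · exact List.ne_nil_of_length_pos (by omega)
    · exact List.ne_nil_of_length_pos (by omega)
    · change word _ _ _ * word _ _ _ = _
      rw [word_mul_word_of_lt (by omega)]
      simp only [List.take_append_drop]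

lemma words_mul_words_of_eq (hk : 0 < k) (hj : 0 < j) (hkj : k + j = n) :
    words n q k * words n q j = {beta} := by
  have hne : (words n q k * words n q j).Nonempty :=
    (words_nonempty hk (by omega)).mul (words_nonempty hj (by omega))
  refine hne.subset_singleton_iff.mp ?_
  rintro _ ⟨_, ⟨u, hu, -, rfl, -, rfl⟩, _, ⟨v, hv, -, rfl, -, rfl⟩, rfl⟩
  exact word_mul_word_of_eq hkj

end Sn

open Sn

variable {n : ℕ} {q : ℕ+}

lemma alpha_mem_Aset : alpha ∈ Aset n q := .inl rfl

lemma Aset_eq_insert_words : Aset n q = insert alpha (words n q 1) := by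
  ext x
  constructor
  · rintro (rfl | ⟨m, hn, hm, rfl⟩)
    · exact .inl rfl
    · exact .inr ⟨[m], by simp, by simpa using hn, rfl, by simpa using hm, rfl⟩
  · rintro (rfl | ⟨l, hl, hln, hlen, hlq, rfl⟩)
    · exact .inl rfl
    · obtain ⟨m, rfl⟩ := List.length_eq_one_iff.mp hlen
      exact .inr ⟨m, by simpa using hln, hlq m (by simp), rfl⟩

lemma prodSet_Aset_of_lt {k : ℕ} (hk : 0 < k) (hkn : k < n) :
    prodSet (Aset n q) k = insert alpha (words n q k) := by
  induction k with
  | zero => omega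
  | succ k ih =>
    rcases Nat.eq_zero_or_pos k with rfl | hk
    · exact Aset_eq_insert_words
    rw [prodSet_succ _ hk, ih hk (by omega), Aset_eq_insert_words,
      insert_mul_insert_of_absorbing alpha_mul mul_alpha, words_mul_words hk one_pos hkn]

lemma prodSet_Aset_self (hn : 2 ≤ n) : prodSet (Aset n q) n = {alpha, beta} := by
  obtain ⟨k, rfl⟩ := Nat.exists_eq_add_of_lt (show 1 < n by omega)
  rw [prodSet_succ _ (by omega), prodSet_Aset_of_lt (by omega) (by omega), Aset_eq_insert_words,
    insert_mul_insert_of_absorbing alpha_mul mul_alpha,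
    words_mul_words_of_eq (by omega) one_pos (by omega)]

lemma mul_Aset_eq_alpha_of_subset_pair {s : Set (Sn n)} (hα : alpha ∈ s) (hs : s ⊆ {alpha, beta}) :
    s * Aset n q = {alpha} := by
  refine (Set.Nonempty.mul ⟨_, hα⟩ ⟨_, alpha_mem_Aset⟩).subset_singleton_iff.mp ?_
  rintro _ ⟨y, hy, a, -, rfl⟩
  rcases hs hy with rfl | rfl
  · exact alpha_mul a
  · exact beta_mul a

/-- For `n ≥ 2` and `q ≥ 1`, the `n`-fold product set of `A_{n,q}` equals `{α, β}`,
and for every `h > n` the `h`-fold product set of `A_{n,q}` equals `{α}`. -/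
theorem stmt_7 (n : ℕ) (hn : 2 ≤ n) (q : ℕ+) :
    prodSet (Aset n q) n = {Sn.alpha, Sn.beta} ∧
    ∀ h : ℕ, n < h → prodSet (Aset n q) h = {Sn.alpha} := by
  refine ⟨prodSet_Aset_self hn, fun h hh => ?_⟩
  induction h, hh using Nat.le_induction with
  | base =>
    rw [prodSet_succ _ (by omega), prodSet_Aset_self hn]
    exact mul_Aset_eq_alpha_of_subset_pair (.inl rfl) subset_rfl
  | succ h hh ih =>
    rw [prodSet_succ _ (by omega), ih]
    exact mul_Aset_eq_alpha_of_subset_pair rfl (by simp)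
end

section
/- For every subset X ⊆ ℕ with 1 ∈ X, there exist a semigroup S and a sequence (A_q)_{q≥1} of subsets of S which is asymptotically strictly decreasing (A_{q+1} ⊆ A_q for all q ≥ 1 and A_q ≠ A_{q+1} for infinitely many q) such that the product intersection set H_ℕ^S(A_q) equals X; that is, for every h ∈ ℕ, (⋂_{q≥1} A_q)^h = ⋂_{q≥1} A_q^h if and only if h ∈ X. -/
open Pointwise

structure W where
  m : ℕ
  k : ℕ
  t : ℕ

def wmul (x y : W) : W :=
  if x.m = y.m ∧ x.k + y.k ≤ x.m then
    ⟨x.m, x.k + y.k, if x.k + y.k = x.m then 0 else min x.t y.t⟩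
  else ⟨0,0,0⟩

instance : Mul W := ⟨wmul⟩

lemma wmul_def (x y : W) : x * y = wmul x y := rfl

instance : Semigroup W where
  mul_assoc a b c := by
    obtain ⟨am, ak, at'⟩ := a
    obtain ⟨bm, bk, bt⟩ := b
    obtain ⟨cm, ck, ct⟩ := c
    simp only [wmul_def, wmul]
    split_ifs <;> simp only [W.mk.injEq, true_and, and_true] at * <;> omega

def wa : W := ⟨0,0,0⟩

lemma wmul_mk_pos {a b b' : ℕ} (c c' : ℕ) (h : b + b' ≤ a) :
    (⟨a, b, c⟩ : W) * ⟨a, b', c'⟩ =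
      ⟨a, b + b', if b + b' = a then 0 else min c c'⟩ := by
  rw [wmul_def]; unfold wmul; dsimp only; rw [if_pos ⟨rfl, h⟩]

lemma wmul_mk_neg {a a' b b' : ℕ} (c c' : ℕ) (h : ¬(a = a' ∧ b + b' ≤ a)) :
    (⟨a, b, c⟩ : W) * ⟨a', b', c'⟩ = wa := by
  rw [wmul_def]; unfold wmul; dsimp only; rw [if_neg h]; rfl

lemma wa_mul (x : W) : wa * x = wa := by
  obtain ⟨m, k, t⟩ := x
  simp only [wa, wmul_def, wmul]
  split_ifs <;> simp only [W.mk.injEq, true_and, and_true] at * <;> omega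

lemma mul_wa (x : W) : x * wa = wa := by
  obtain ⟨m, k, t⟩ := x
  simp only [wa, wmul_def, wmul]
  split_ifs <;> simp only [W.mk.injEq, true_and, and_true] at * <;> omega

/-- The sets `A_q`. -/
def wA (X : Set ℕ) (q : ℕ+) : Set W :=
  {p | p = wa ∨ (p.k = 1 ∧ (p.m ≤ 1 ∨ p.m ∉ X) ∧ (q : ℕ) ≤ p.t)}

/-- The `h`-fold products of `A_q`, for `h ≥ 2`. -/
def wG (X : Set ℕ) (h : ℕ) (q : ℕ+) : Set W :=
  {p | p = wa ∨ (2 ≤ p.m ∧ p.m ∉ X ∧ p.k = h ∧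
    ((p.m = h ∧ p.t = 0) ∨ (h < p.m ∧ (q : ℕ) ≤ p.t)))}

lemma wa_mem_wA (X : Set ℕ) (q : ℕ+) : wa ∈ wA X q := Or.inl rfl
lemma wa_mem_wG (X : Set ℕ) (h : ℕ) (q : ℕ+) : wa ∈ wG X h q := Or.inl rfl

lemma mk_mem_wA {X : Set ℕ} {q : ℕ+} {m t' : ℕ} (h1 : m ≤ 1 ∨ m ∉ X)
    (h2 : (q : ℕ) ≤ t') : (⟨m, 1, t'⟩ : W) ∈ wA X q :=
  Or.inr ⟨rfl, h1, h2⟩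

lemma mk_mem_wG {X : Set ℕ} {h q' : ℕ} {q : ℕ+} {m t' : ℕ} (h1 : 2 ≤ m)
    (h2 : m ∉ X) (h3 : (m = h ∧ t' = 0) ∨ (h < m ∧ (q : ℕ) ≤ t')) (hq' : q' = h) :
    (⟨m, q', t'⟩ : W) ∈ wG X h q :=
  Or.inr ⟨h1, h2, hq', h3⟩

lemma wA_mul_self (X : Set ℕ) (q : ℕ+) : wA X q * wA X q = wG X 2 q := by
  ext p
  simp only [Set.mem_mul]
  constructor
  · rintro ⟨b, hb, c, hc, rfl⟩
    rcases hb with rfl | ⟨hbk, hbm, hbt⟩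
    · rw [wa_mul]; exact wa_mem_wG X 2 q
    rcases hc with rfl | ⟨hck, hcm, hct⟩
    · rw [mul_wa]; exact wa_mem_wG X 2 q
    obtain ⟨bm, bk, bt⟩ := b
    obtain ⟨cm, ck, ct⟩ := c
    dsimp only at hbk hbm hbt hck hcm hct
    subst hbk; subst hck
    by_cases hcond : bm = cm ∧ 1 + 1 ≤ bm
    · obtain ⟨rfl, h2⟩ := hcond
      rw [wmul_mk_pos bt ct h2]
      have hbX : bm ∉ X := by rcases hbm with h' | h' <;> [omega; exact h']
      by_cases h2b : 1 + 1 = bm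
      · rw [if_pos h2b]
        exact mk_mem_wG (by omega) hbX (Or.inl ⟨by omega, rfl⟩) rfl
      · rw [if_neg h2b]
        exact mk_mem_wG (by omega) hbX (Or.inr ⟨by omega, le_min hbt hct⟩) rfl
    · rw [wmul_mk_neg bt ct hcond]; exact wa_mem_wG X 2 q
  · rintro (rfl | ⟨h2m, hmX, hk, hd⟩)
    · exact ⟨wa, wa_mem_wA X q, wa, wa_mem_wA X q, wa_mul wa⟩
    obtain ⟨pm, pk, pt⟩ := p
    dsimp only at h2m hmX hk hd
    subst hk
    rcases hd with ⟨rfl, rfl⟩ | ⟨hlt, hq⟩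
    · refine ⟨⟨2, 1, q⟩, mk_mem_wA (Or.inr hmX) le_rfl,
        ⟨2, 1, q⟩, mk_mem_wA (Or.inr hmX) le_rfl, ?_⟩
      rw [wmul_mk_pos _ _ (by omega), if_pos rfl]
    · refine ⟨⟨pm, 1, pt⟩, mk_mem_wA (Or.inr hmX) hq,
        ⟨pm, 1, pt⟩, mk_mem_wA (Or.inr hmX) hq, ?_⟩
      rw [wmul_mk_pos _ _ (by omega), if_neg (by omega), min_self]

lemma wG_mul_wA (X : Set ℕ) (n : ℕ) (hh : 2 ≤ n) (q : ℕ+) :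
    wG X n q * wA X q = wG X (n + 1) q := by
  ext p
  simp only [Set.mem_mul]
  constructor
  · rintro ⟨b, hb, c, hc, rfl⟩
    rcases hb with rfl | ⟨hb2, hbX, hbk, hbd⟩
    · rw [wa_mul]; exact wa_mem_wG X (n+1) q
    rcases hc with rfl | ⟨hck, hcm, hct⟩
    · rw [mul_wa]; exact wa_mem_wG X (n+1) q
    obtain ⟨bm, bk, bt⟩ := b
    obtain ⟨cm, ck, ct⟩ := c
    dsimp only at hb2 hbX hbk hbd hck hcm hct
    rw [hbk, hck]
    by_cases hcond : bm = cm ∧ n + 1 ≤ bm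
    · obtain ⟨rfl, hle⟩ := hcond
      rw [wmul_mk_pos bt ct hle]
      by_cases hb : n + 1 = bm
      · rw [if_pos hb]
        exact mk_mem_wG hb2 hbX (Or.inl ⟨hb.symm, rfl⟩) rfl
      · rw [if_neg hb]
        have hbt' : (q : ℕ) ≤ bt := by
          rcases hbd with ⟨h1, _⟩ | ⟨_, h2⟩ <;> omega
        exact mk_mem_wG hb2 hbX (Or.inr ⟨by omega, le_min hbt' hct⟩) rfl
    · rw [wmul_mk_neg bt ct hcond]; exact wa_mem_wG X (n+1) q
  · rintro (rfl | ⟨h2m, hmX, hk, hd⟩)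
    · exact ⟨wa, wa_mem_wG X n q, wa, wa_mem_wA X q, wa_mul wa⟩
    obtain ⟨pm, pk, pt⟩ := p
    dsimp only at h2m hmX hk hd
    subst hk
    rcases hd with ⟨rfl, rfl⟩ | ⟨hlt, hq⟩
    · refine ⟨⟨n + 1, n, q⟩, mk_mem_wG h2m hmX (Or.inr ⟨by omega, le_rfl⟩) rfl,
        ⟨n + 1, 1, q⟩, mk_mem_wA (Or.inr hmX) le_rfl, ?_⟩
      rw [wmul_mk_pos _ _ le_rfl, if_pos rfl]
    · refine ⟨⟨pm, n, pt⟩, mk_mem_wG h2m hmX (Or.inr ⟨by omega, hq⟩) rfl,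
        ⟨pm, 1, pt⟩, mk_mem_wA (Or.inr hmX) hq, ?_⟩
      rw [wmul_mk_pos _ _ (by omega), if_neg (by omega), min_self]

lemma prodSet_wA (X : Set ℕ) (q : ℕ+) :
    ∀ n : ℕ, prodSet (wA X q) (n + 2) = wG X (n + 2) q := by
  intro n
  induction n with
  | zero =>
    show prodSet (wA X q) 1 * wA X q = wG X 2 q
    rw [show prodSet (wA X q) 1 = wA X q from rfl, wA_mul_self]
  | succ n ih =>
    show prodSet (wA X q) (n + 2) * wA X q = wG X (n + 3) q
    rw [ih, wG_mul_wA X (n + 2) (by omega) q]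

lemma prodSet_wa : ∀ h : ℕ, 1 ≤ h → prodSet ({wa} : Set W) h = {wa} := by
  intro h
  induction h with
  | zero => omega
  | succ n ih =>
    intro _
    match n, ih with
    | 0, _ => rfl
    | Nat.succ n, ih =>
      show prodSet ({wa} : Set W) (n + 1) * {wa} = {wa}
      rw [ih (by omega), Set.singleton_mul_singleton, wa_mul]

lemma iInter_wA (X : Set ℕ) : ⋂ q, wA X q = {wa} := by
  ext p
  simp only [Set.mem_iInter, Set.mem_singleton_iff]
  constructor
  · intro hp
    by_contra hne
    have h1 : ∀ q : ℕ+, (q : ℕ) ≤ p.t := by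
      intro q
      rcases hp q with rfl | ⟨_, _, hq⟩
      · exact absurd rfl hne
      · exact hq
    have h2 : p.t + 1 ≤ p.t := h1 ⟨p.t + 1, Nat.succ_pos _⟩
    omega
  · rintro rfl q
    exact wa_mem_wA X q

/-- For every `X ⊆ ℕ = {1, 2, …}` with `1 ∈ X`, there exist a semigroup `S` and an
asymptotically strictly decreasing sequence `(A_q)_{q ≥ 1}` of subsets of `S`
(i.e. `A_{q+1} ⊆ A_q` for all `q` and `A_q ≠ A_{q+1}` for infinitely many `q`) whose
product intersection set equals `X`: for every `h ∈ ℕ`,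
`(⋂_{q ≥ 1} A_q)^h = ⋂_{q ≥ 1} A_q^h` if and only if `h ∈ X`. -/
theorem stmt_10 (X : Set ℕ) (hX : 1 ∈ X) :
    ∃ (S : Type) (_ : Semigroup S) (A : ℕ+ → Set S),
      (∀ q : ℕ+, A (q + 1) ⊆ A q) ∧
      {q : ℕ+ | A q ≠ A (q + 1)}.Infinite ∧
      ∀ h : ℕ, 1 ≤ h →
        (prodSet (⋂ q, A q) h = (⋂ q, prodSet (A q) h) ↔ h ∈ X) := by
  refine ⟨W, inferInstance, wA X, ?_, ?_, ?_⟩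
  · -- decreasing
    intro q p hp
    rcases hp with rfl | ⟨h1, h2, h3⟩
    · exact wa_mem_wA X q
    · refine Or.inr ⟨h1, h2, ?_⟩
      have he : ((q + 1 : ℕ+) : ℕ) = (q : ℕ) + 1 := rfl
      omega
  · -- infinitely many strict decreases
    have huniv : {q : ℕ+ | wA X q ≠ wA X (q + 1)} = Set.univ := by
      refine Set.eq_univ_of_forall fun q => ?_
      intro heq
      have hmem : (⟨1, 1, (q : ℕ)⟩ : W) ∈ wA X q :=
        mk_mem_wA (Or.inl le_rfl) le_rfl
      rw [heq] at hmem
      rcases hmem with h' | ⟨_, _, hq⟩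
      · exact absurd (congrArg W.m h') (by simp [wa])
      · have he : ((q + 1 : ℕ+) : ℕ) = (q : ℕ) + 1 := rfl
        dsimp only at hq
        omega
    rw [huniv]
    exact Set.infinite_univ
  · -- the product intersection set is X
    intro h h1
    rw [iInter_wA]
    match h, h1 with
    | 1, _ =>
      rw [prodSet_wa 1 le_rfl]
      have he : (⋂ q, prodSet (wA X q) 1) = ⋂ q, wA X q := rfl
      rw [he, iInter_wA]
      simp [hX]
    | (n + 2), _ =>
      rw [prodSet_wa (n + 2) (by omega)]
      have hG : (⋂ q, prodSet (wA X q) (n + 2)) = ⋂ q, wG X (n + 2) q := by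
        simp only [prodSet_wA]
      rw [hG]
      constructor
      · intro heq
        by_contra hnx
        have hmem : (⟨n + 2, n + 2, 0⟩ : W) ∈ ⋂ q, wG X (n + 2) q :=
          Set.mem_iInter.mpr fun q =>
            mk_mem_wG (by omega) hnx (Or.inl ⟨rfl, rfl⟩) rfl
        rw [← heq] at hmem
        exact absurd (congrArg W.m hmem) (by simp [wa])
      · intro hx
        ext p
        simp only [Set.mem_singleton_iff, Set.mem_iInter]
        constructor
        · rintro rfl q; exact wa_mem_wG X (n + 2) q
        · intro hp
          by_contra hne
          have key : ∀ q : ℕ+, (q : ℕ) ≤ p.t := by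
            intro q
            rcases hp q with rfl | ⟨h2m, hmX, hk, hd⟩
            · exact absurd rfl hne
            rcases hd with ⟨hm, _⟩ | ⟨_, hq⟩
            · exact absurd (hm ▸ hx) hmX
            · exact hq
          have h2 : p.t + 1 ≤ p.t := key ⟨p.t + 1, Nat.succ_pos _⟩
          omega
end

section
/- Let S be a semigroup and let (A_q)_{q≥1} be a sequence of subsets of S which is asymptotically strictly decreasing, meaning A_{q+1} ⊆ A_q for all q ≥ 1 and A_q ≠ A_{q+1} for infinitely many q. Then 1 belongs to the product intersection set H_ℕ^S(A_q). Consequently, combined with the realization of every X ∋ 1, the global set H_ℕ* of all product intersection sets of asymptotically strictly decreasing sequences in arbitrary semigroups equals {X ⊆ ℕ : 1 ∈ X}. -/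
open Pointwise

/-!
`1 ∈ H` always, since `B^1 = B`. For the realization, fix `m` and let `LevelTag m` consist of
pairs `⟨k, t⟩`, read as a product of `k` generators (`k` capped at `m + 1`) whose largest index
is `t`, the index being forgotten as soon as `k ≥ m`; then `⟨m + 1, 0⟩` is a zero. With
`A_q = {0} ∪ {⟨1, j⟩ : j ≥ q}` the intersection is `{0}`, and an `n`-fold product from `A_q` is
`0` or has index `≥ q`, except that for `n = m` every `⟨1, q⟩^m` equals `⟨m, 0⟩ ≠ 0`. Hence
`H = {h ≥ 1 : h ≠ m}` (for `m ≠ 1`). Product intersection sets of a product semigroup with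
product sets `A_q` are the intersections of those of the factors, so the product over all
`m ∉ X` realizes `X`.
-/

open Set

theorem Set.univ_pi_mul_univ_pi {ι : Type*} {T : ι → Type*} [∀ i, Mul (T i)]
    (s t : ∀ i, Set (T i)) : pi univ s * pi univ t = pi univ fun i => s i * t i := by
  ext f
  constructor
  · rintro ⟨x, hx, y, hy, rfl⟩ i -
    exact mul_mem_mul (hx i trivial) (hy i trivial)
  · intro hf
    choose x hx y hy hxy using fun i => hf i trivial
    exact ⟨x, fun i _ => hx i, y, fun i _ => hy i, funext hxy⟩

theorem Set.univ_pi_eq_univ_pi_iff {ι : Type*} {T : ι → Type*} {s t : ∀ i, Set (T i)}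
    (hs : (pi univ s).Nonempty) : pi univ s = pi univ t ↔ s = t := by
  refine ⟨fun hst => funext fun i => ?_, congrArg _⟩
  rw [← eval_image_univ_pi hs, hst, eval_image_univ_pi (hst ▸ hs)]

theorem Set.iInter_univ_pi {ι κ : Type*} {T : ι → Type*} (s : κ → ∀ i, Set (T i)) :
    ⋂ k, pi univ (s k) = pi univ fun i => ⋂ k, s k i := by
  ext f
  simp only [mem_iInter, mem_univ_pi]
  exact forall_comm

section ProdSet

variable {S : Type*} [Mul S]

theorem prodSet_succ_of_ne_zero (B : Set S) {n : ℕ} (hn : n ≠ 0) :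
    prodSet B (n + 1) = prodSet B n * B := by
  obtain ⟨k, rfl⟩ := Nat.exists_eq_succ_of_ne_zero hn
  rfl

theorem prodSet_mono {B C : Set S} (h : B ⊆ C) : ∀ n, prodSet B n ⊆ prodSet C n
  | 0 => subset_rfl
  | 1 => h
  | n + 2 => mul_subset_mul (prodSet_mono h (n + 1)) h

theorem prodSet_iInter_subset {ι : Sort*} (A : ι → Set S) (n : ℕ) :
    prodSet (⋂ i, A i) n ⊆ ⋂ i, prodSet (A i) n :=
  subset_iInter fun i => prodSet_mono (iInter_subset A i) n

theorem prodSet_singleton_of_mul_self {x : S} (hx : x * x = x) {n : ℕ} (hn : n ≠ 0) :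
    prodSet {x} n = {x} := by
  obtain ⟨n, rfl⟩ := Nat.exists_eq_succ_of_ne_zero hn
  induction n with
  | zero => rfl
  | succ n ih => rw [prodSet_succ_of_ne_zero _ n.succ_ne_zero, ih n.succ_ne_zero,
      singleton_mul_singleton, hx]

theorem prodSet_nonempty {B : Set S} (hB : B.Nonempty) {n : ℕ} (hn : n ≠ 0) :
    (prodSet B n).Nonempty := by
  obtain ⟨n, rfl⟩ := Nat.exists_eq_succ_of_ne_zero hn
  induction n with
  | zero => exact hB
  | succ n ih => rw [prodSet_succ_of_ne_zero _ n.succ_ne_zero]; exact (ih n.succ_ne_zero).mul hB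

theorem prodSet_univ_pi {ι : Type*} {T : ι → Type*} [∀ i, Mul (T i)] (B : ∀ i, Set (T i))
    {n : ℕ} (hn : n ≠ 0) : prodSet (pi univ B) n = pi univ fun i => prodSet (B i) n := by
  obtain ⟨n, rfl⟩ := Nat.exists_eq_succ_of_ne_zero hn
  induction n with
  | zero => rfl
  | succ n ih =>
    simp only [prodSet_succ_of_ne_zero _ n.succ_ne_zero, ih n.succ_ne_zero, univ_pi_mul_univ_pi]

end ProdSet

/-- The product intersection set `H_ℕ^S(A_q)`. -/
def prodInterSet {S : Type*} [Mul S] (A : ℕ+ → Set S) : Set ℕ :=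
  {h | 1 ≤ h ∧ prodSet (⋂ q, A q) h = ⋂ q, prodSet (A q) h}

theorem one_mem_prodInterSet {S : Type*} [Mul S] (A : ℕ+ → Set S) : 1 ∈ prodInterSet A :=
  ⟨le_rfl, rfl⟩

theorem zero_notMem_prodInterSet {S : Type*} [Mul S] (A : ℕ+ → Set S) : 0 ∉ prodInterSet A :=
  fun h => absurd h.1 (by decide)

theorem prodInterSet_univ_pi {ι : Type*} {T : ι → Type*} [∀ i, Mul (T i)]
    (A : ∀ i, ℕ+ → Set (T i)) (hA : ∀ i, (⋂ q, A i q).Nonempty) :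
    prodInterSet (fun q => pi univ fun i => A i q) =
      {h | 1 ≤ h ∧ ∀ i, h ∈ prodInterSet (A i)} := by
  ext h
  simp only [prodInterSet, mem_ofPred_eq]
  refine and_congr_right fun h1 => ?_
  have hn : h ≠ 0 := by omega
  simp only [iInter_univ_pi, prodSet_univ_pi _ hn, h1, true_and]
  rw [univ_pi_eq_univ_pi_iff, funext_iff]
  exact univ_pi_nonempty_iff.2 fun i => prodSet_nonempty (hA i) hn

@[ext]
structure LevelTag (m : ℕ) where
  level : ℕ
  tag : ℕ

namespace LevelTag

variable {m : ℕ}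

instance : Mul (LevelTag m) :=
  ⟨fun x y => ⟨min (x.level + y.level) (m + 1),
    if m ≤ x.level + y.level then 0 else max x.tag y.tag⟩⟩

instance : Zero (LevelTag m) := ⟨⟨m + 1, 0⟩⟩

@[simp] lemma level_mul (x y : LevelTag m) :
    (x * y).level = min (x.level + y.level) (m + 1) := rfl

@[simp] lemma tag_mul (x y : LevelTag m) :
    (x * y).tag = if m ≤ x.level + y.level then 0 else max x.tag y.tag := rfl

@[simp] lemma level_zero : (0 : LevelTag m).level = m + 1 := rfl

@[simp] lemma tag_zero : (0 : LevelTag m).tag = 0 := rfl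

instance : SemigroupWithZero (LevelTag m) where
  mul_assoc x y z := by ext <;> simp only [level_mul, tag_mul] <;> (try split_ifs) <;> omega
  zero_mul x := by ext <;> simp; omega
  mul_zero x := by ext <;> simp; omega

def gen (m j : ℕ) : LevelTag m := ⟨1, j⟩

def genSet (m : ℕ) (q : ℕ+) : Set (LevelTag m) := insert 0 (gen m '' Ici (q : ℕ))

theorem gen_injective : Function.Injective (gen m) := fun _ _ h => congrArg tag h

theorem gen_ne_zero {j : ℕ} (hj : j ≠ 0) : gen m j ≠ 0 := fun h => hj (congrArg tag h)

theorem gen_mem_genSet {q : ℕ+} {j : ℕ} (hj : (q : ℕ) ≤ j) : gen m j ∈ genSet m q :=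
  mem_insert_of_mem _ (mem_image_of_mem _ hj)

theorem genSet_succ_subset (q : ℕ+) : genSet m (q + 1) ⊆ genSet m q :=
  insert_subset_insert <| image_mono <| Ici_subset_Ici.2 <| by simp

theorem genSet_ne_genSet_succ (q : ℕ+) : genSet m q ≠ genSet m (q + 1) := by
  intro h
  have hq : gen m q ∈ genSet m (q + 1) := h ▸ gen_mem_genSet le_rfl
  rcases hq with hq | ⟨j, hj, hjq⟩
  · exact gen_ne_zero q.ne_zero hq
  · rw [gen_injective hjq, mem_Ici, PNat.add_coe, PNat.one_coe] at hj
    omega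

theorem iInter_genSet : ⋂ q, genSet m q = {0} := by
  refine subset_antisymm (fun x hx => ?_) (subset_iInter fun q => by simp [genSet])
  rw [mem_iInter] at hx
  rcases hx 1 with rfl | ⟨j, hj, rfl⟩
  · rfl
  · rcases hx ⟨j + 1, j.succ_pos⟩ with hj' | ⟨j', hj', hjj'⟩
    · exact absurd hj' (gen_ne_zero (by simp at hj; omega))
    · rw [gen_injective hjj'] at hj'
      simp at hj'

theorem mem_prodSet_genSet {q : ℕ+} : ∀ {n : ℕ} {x : LevelTag m},
    x ∈ prodSet (genSet m q) n → x = 0 ∨ x.level = n ∧ (q : ℕ) ≤ x.tag ∨ x = ⟨m, 0⟩ ∧ n = m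
  | 1, x, hx => by
    rcases hx with rfl | ⟨j, hj, rfl⟩
    · exact Or.inl rfl
    · exact Or.inr (Or.inl ⟨rfl, hj⟩)
  | n + 2, _, ⟨y, hy, b, hb, rfl⟩ => by
    rcases hb with rfl | ⟨j, hj, rfl⟩
    · exact Or.inl (mul_zero y)
    rcases mem_prodSet_genSet hy with rfl | ⟨hl, ht⟩ | ⟨rfl, -⟩
    · exact Or.inl (zero_mul _)
    · simp only [LevelTag.ext_iff, level_mul, tag_mul, level_zero, tag_zero, gen, hl]
      simp only [mem_Ici] at hj
      split_ifs <;> omega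
    · left
      ext <;> simp [gen]

theorem mem_prodSet_genSet_of_lt {q : ℕ+} {j : ℕ} (hj : (q : ℕ) ≤ j) {k : ℕ} (hk : k ≠ 0)
    (hkm : k < m) : ⟨k, j⟩ ∈ prodSet (genSet m q) k := by
  obtain ⟨k, rfl⟩ := Nat.exists_eq_succ_of_ne_zero hk
  induction k with
  | zero => exact gen_mem_genSet hj
  | succ k ih =>
    rw [prodSet_succ_of_ne_zero _ k.succ_ne_zero]
    convert mul_mem_mul (ih k.succ_ne_zero (by omega)) (gen_mem_genSet hj) using 1
    ext <;> simp [gen] <;> omega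

theorem mem_prodSet_genSet_self (hm : 2 ≤ m) (q : ℕ+) : ⟨m, 0⟩ ∈ prodSet (genSet m q) m := by
  obtain ⟨k, rfl⟩ := Nat.exists_eq_add_of_le' hm
  rw [prodSet_succ_of_ne_zero _ (by omega)]
  convert mul_mem_mul
    (mem_prodSet_genSet_of_lt (m := k + 2) (k := k + 1) le_rfl (by omega) (by omega))
    (gen_mem_genSet le_rfl) using 1
  ext <;> simp [gen]

theorem prodInterSet_genSet (hm : m ≠ 1) : prodInterSet (genSet m) = {h | 1 ≤ h ∧ h ≠ m} := by
  ext h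
  simp only [prodInterSet, mem_ofPred_eq]
  refine and_congr_right fun h1 => ⟨?_, fun hne => ?_⟩
  · rintro heq rfl
    have hz := mem_iInter.2 fun q => mem_prodSet_genSet_self (m := h) (by omega) q
    rw [← heq, iInter_genSet, prodSet_singleton_of_mul_self (mul_zero 0) (by omega)] at hz
    exact absurd (congrArg level hz) (by simp)
  · refine (prodSet_iInter_subset _ h).antisymm fun x hx => ?_
    rw [iInter_genSet, prodSet_singleton_of_mul_self (mul_zero 0) (by omega), mem_singleton_iff]
    have := mem_prodSet_genSet (mem_iInter.1 hx ⟨x.tag + 1, x.tag.succ_pos⟩)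
    simp only [PNat.mk_coe, hne, and_false, or_false] at this
    exact this.resolve_right (by omega)

end LevelTag

theorem exists_prodInterSet_eq {X : Set ℕ} (h1 : 1 ∈ X) (h0 : 0 ∉ X) :
    ∃ (S : Type) (_ : Semigroup S) (A : ℕ+ → Set S),
      (∀ q : ℕ+, A (q + 1) ⊆ A q) ∧ {q : ℕ+ | A q ≠ A (q + 1)}.Infinite ∧
      X = prodInterSet A := by
  -- `0 ∉ X` puts the factor `m = 0`, strictly decreasing at every `q`, into the product.
  have hne (q : ℕ+) : (pi univ fun m : {m // m ∉ X} => LevelTag.genSet m q).Nonempty :=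
    univ_pi_nonempty_iff.2 fun _ => ⟨0, mem_insert _ _⟩
  have hstrict (q : ℕ+) : (pi univ fun m : {m // m ∉ X} => LevelTag.genSet m q) ≠
      pi univ fun m : {m // m ∉ X} => LevelTag.genSet m (q + 1) := fun h =>
    LevelTag.genSet_ne_genSet_succ q (congrFun ((univ_pi_eq_univ_pi_iff (hne q)).1 h) ⟨0, h0⟩)
  have hH (m : {m // m ∉ X}) : prodInterSet (LevelTag.genSet m) = {h : ℕ | 1 ≤ h ∧ h ≠ m} :=
    LevelTag.prodInterSet_genSet fun hm => m.2 (hm.symm ▸ h1)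
  refine ⟨∀ m : {m // m ∉ X}, LevelTag m, inferInstance,
    fun q => pi univ fun m => LevelTag.genSet m q,
    fun q => pi_mono fun m _ => LevelTag.genSet_succ_subset q,
    by rw [eq_univ_of_forall hstrict]; exact infinite_univ, ?_⟩
  rw [prodInterSet_univ_pi _ fun m => ⟨0, by rw [LevelTag.iInter_genSet]; rfl⟩]
  ext h
  simp only [hH, mem_ofPred_eq]
  have hpos : ∀ h ∈ X, 1 ≤ h := fun h hX => Nat.one_le_iff_ne_zero.2 fun h' => h0 (h' ▸ hX)
  exact ⟨fun hX => ⟨hpos h hX, fun m => ⟨hpos h hX, fun e => m.2 (e ▸ hX)⟩⟩,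
    fun ⟨_, hall⟩ => by_contra fun hX => (hall ⟨h, hX⟩).2 rfl⟩

/-- (1) For every semigroup `S` and every asymptotically strictly decreasing sequence
`(A_q)_{q ≥ 1}` of subsets of `S`, the exponent `1` belongs to the product intersection
set `H_ℕ^S(A_q)`.  (2) Consequently, the global set `H_ℕ*` of all product intersection
sets of asymptotically strictly decreasing sequences in arbitrary semigroups equals
`{X ⊆ ℕ : 1 ∈ X}` (here `ℕ = {1, 2, …}`, so membership of `0` is excluded). -/
theorem stmt_11 :
    (∀ (S : Type*) (_ : Semigroup S) (A : ℕ+ → Set S),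
      (∀ q : ℕ+, A (q + 1) ⊆ A q) → {q : ℕ+ | A q ≠ A (q + 1)}.Infinite →
      1 ∈ {h : ℕ | 1 ≤ h ∧ prodSet (⋂ q, A q) h = ⋂ q, prodSet (A q) h}) ∧
    {X : Set ℕ | ∃ (S : Type) (_ : Semigroup S) (A : ℕ+ → Set S),
        (∀ q : ℕ+, A (q + 1) ⊆ A q) ∧ {q : ℕ+ | A q ≠ A (q + 1)}.Infinite ∧
        X = {h : ℕ | 1 ≤ h ∧ prodSet (⋂ q, A q) h = ⋂ q, prodSet (A q) h}}
      = {X : Set ℕ | 1 ∈ X ∧ 0 ∉ X} := by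
  refine ⟨fun S _ A _ _ => one_mem_prodInterSet A, Set.ext fun X => ⟨?_, ?_⟩⟩
  · rintro ⟨S, _, A, -, -, rfl⟩
    exact ⟨one_mem_prodInterSet A, zero_notMem_prodInterSet A⟩
  · rintro ⟨h1, h0⟩
    exact exists_prodInterSet_eq h1 h0
end
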